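/- arXiv:2508.06133 — 3 statements merged into one kernel-verified Lean document; each statement's English description precedes it below -/
import Mathlib

section
/- Let X be a finite nonempty multiset of positive real numbers (output lengths) with maximum o_max and mean ō = (Σ_{o∈X} o)/|X|. Suppose that removing the maximal element does not decrease the quality metric F, i.e., (Σ_{o∈X} o − o_max)/(|X|−1)² ≥ (Σ_{o∈X} o)/|X|² (with |X| ≥ 2). Then ō ≥ (|X|/(2|X|−1))·o_max, and in particular ō > o_max/2. -/
theorem stmt0 (X : Multiset ℝ) (hcard : 2 ≤ X.card)
    (hpos : ∀ o ∈ X, (0:ℝ) < o)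
    (omax : ℝ) (hmem : omax ∈ X) (hmax : ∀ o ∈ X, o ≤ omax)
    (hF : (X.sum - omax) / ((X.card : ℝ) - 1)^2 ≥ X.sum / (X.card : ℝ)^2) :
    X.sum / (X.card : ℝ) ≥ ((X.card : ℝ) / (2 * (X.card : ℝ) - 1)) * omax ∧
    X.sum / (X.card : ℝ) > omax / 2 := by
  set n : ℝ := (X.card : ℝ) with hn
  have hn2 : (2:ℝ) ≤ n := by rw [hn]; exact_mod_cast hcard
  have homax : 0 < omax := hpos omax hmem
  have hS : 0 < X.sum := by
    have h1 : X.sum = omax + (X.erase omax).sum := by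
      conv_lhs => rw [← Multiset.cons_erase hmem]
      simp
    have h2 : 0 ≤ (X.erase omax).sum :=
      Multiset.sum_nonneg fun x hx => (hpos x (Multiset.mem_of_mem_erase hx)).le
    linarith
  have hden1 : (0:ℝ) < (n - 1)^2 := by nlinarith
  have hden2 : (0:ℝ) < n^2 := by nlinarith
  have key : X.sum * (2*n - 1) ≥ n^2 * omax := by
    have := (div_le_div_iff₀ hden2 hden1).mp hF
    nlinarith
  constructor
  · rw [ge_iff_le, div_mul_eq_mul_div, div_le_div_iff₀ (by linarith) (by linarith)]
    nlinarith
  · rw [gt_iff_lt, div_lt_div_iff₀ (by norm_num) (by linarith)]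
    nlinarith
end

section
/- Let x₁, …, x_{3m} be positive integers with T/4 < x_i < T/2 and Σ x_i = mT. Batches are processed sequentially, one per unit time; if request i is in batch t, its completion time is t. If there exists a partition into m blocks each of sum exactly T, then the minimum total completion time over all feasible batch schedules (each batch having sum ≤ T) equals 3m(m+1)/2. If no such partition exists, any feasible schedule has total completion time strictly greater than 3m(m+1)/2. -/
/-!
Every request exceeds `T/4`, so a batch holds at most three of them and at most `3t` requests
are finished by time `t`. Double counting gives
`∑ᵢ (m - fᵢ) = ∑_{t<m} #{i | fᵢ ≤ t} ≤ 3 ∑_{t<m} t` (truncated subtraction), hence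
`∑ᵢ fᵢ ≥ 3 (1 + ⋯ + m) = 3m(m+1)/2`, with equality only if every request is finished by time `m`.
In that case each of the batches `1, …, m` holds exactly three requests, and as they carry the
total load `mT` with at most `T` each, every batch has load exactly `T`: the batches form the
partition. Conversely, running the blocks of such a partition one per time unit attains the bound.
-/
open Finset

lemma sum_range_add_sum_range_succ (m : ℕ) :
    ∑ t ∈ range m, t + ∑ t ∈ range m, (t + 1) = m * m := by
  induction m with
  | zero => simp
  | succ n ih => simp only [sum_range_succ]; linarith

lemma sum_range_succ_mul_two (m : ℕ) : (∑ t ∈ range m, (t + 1)) * 2 = m * (m + 1) := by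
  have := sum_range_id_mul_two (m + 1)
  rwa [sum_range_succ', add_zero, Nat.add_sub_cancel, mul_comm (m + 1)] at this

lemma card_le_of_sum_le_of_lt_mul {ι : Type*} {S : Finset ι} {x : ι → ℕ} {k T : ℕ}
    (hlow : ∀ i ∈ S, T < (k + 1) * x i) (hS : ∑ i ∈ S, x i ≤ T) : #S ≤ k := by
  have h := card_nsmul_le_sum S (fun i => (k + 1) * x i) (T + 1) hlow
  rw [smul_eq_mul, ← mul_sum] at h
  by_contra! hk
  nlinarith

namespace Finpartition

variable {ι : Type*} [DecidableEq ι] {s : Finset ι} (P : Finpartition s)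

lemma card_eq_of_card_le {k : ℕ} (hle : ∀ B ∈ P.parts, #B ≤ k) (hs : #s = k * #P.parts) :
    ∀ B ∈ P.parts, #B = k := by
  refine (sum_eq_sum_iff_of_le hle).1 ?_
  rw [P.sum_card_parts, sum_const, smul_eq_mul, hs, mul_comm]

lemma sum_eq_sum_parts {M : Type*} [AddCommMonoid M] (g : ι → M) :
    ∑ i ∈ s, g i = ∑ B ∈ P.parts, ∑ i ∈ B, g i := by
  conv_lhs => rw [← P.biUnion_parts]
  exact sum_biUnion P.supIndep.pairwiseDisjoint

end Finpartition

section Schedule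

variable {ι : Type*} [Fintype ι] {f : ι → ℕ} {k : ℕ}

lemma card_filter_le_le_mul (hf : ∀ i, 1 ≤ f i) (hcap : ∀ t, #{i | f i = t} ≤ k) (t : ℕ) :
    #{i | f i ≤ t} ≤ k * t := by
  classical
  have hsub : ({i | f i ≤ t} : Finset ι) ⊆ (Icc 1 t).biUnion fun s => {i | f i = s} := by
    intro i hi
    simp only [mem_filter, mem_univ, true_and] at hi
    exact mem_biUnion.2 ⟨f i, mem_Icc.2 ⟨hf i, hi⟩, by simp⟩
  calc #{i | f i ≤ t} ≤ #(Icc 1 t) * k :=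
        (card_le_card hsub).trans (card_biUnion_le_card_mul _ _ _ fun s _ => hcap s)
    _ = k * t := by rw [Nat.card_Icc, Nat.add_sub_cancel, mul_comm]

lemma sum_tsub_le_mul_sum_range (hf : ∀ i, 1 ≤ f i) (hcap : ∀ t, #{i | f i = t} ≤ k) (m : ℕ) :
    ∑ i, (m - f i) ≤ k * ∑ t ∈ range m, t := by
  have hcount : ∀ i, m - f i = #((range m).bipartiteAbove (fun i t => f i ≤ t) i) := by
    intro i
    rw [bipartiteAbove, ← Nat.card_Ico]
    congr 1
    ext t
    simp only [mem_filter, mem_range, mem_Ico]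
    tauto
  calc ∑ i, (m - f i) = ∑ t ∈ range m, #(univ.bipartiteBelow (fun i t => f i ≤ t) t) := by
        simp only [hcount]
        exact sum_card_bipartiteAbove_eq_sum_card_bipartiteBelow _
    _ ≤ ∑ t ∈ range m, k * t := sum_le_sum fun t _ => card_filter_le_le_mul hf hcap t
    _ = k * ∑ t ∈ range m, t := (mul_sum _ _ _).symm

lemma sum_max_add_mul_sum_range_succ_le {m : ℕ} (hf : ∀ i, 1 ≤ f i) (hcap : ∀ t, #{i | f i = t} ≤ k)
    (hcard : Fintype.card ι = k * m) :
    ∑ i, max (f i) m + k * ∑ t ∈ range m, (t + 1) ≤ ∑ i, f i + Fintype.card ι * m := by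
  have hgauss := congrArg (k * ·) (sum_range_add_sum_range_succ m)
  simp only [mul_add] at hgauss
  calc ∑ i, max (f i) m + k * ∑ t ∈ range m, (t + 1)
        = ∑ i, f i + ∑ i, (m - f i) + k * ∑ t ∈ range m, (t + 1) := by
          rw [← sum_add_distrib]
          exact congrArg (· + _) (sum_congr rfl fun i _ => by omega)
    _ ≤ ∑ i, f i + k * ∑ t ∈ range m, t + k * ∑ t ∈ range m, (t + 1) := by
          grw [sum_tsub_le_mul_sum_range hf hcap m]
    _ = ∑ i, f i + Fintype.card ι * m := by rw [hcard]; linarith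

lemma mul_sum_range_succ_le_sum {m : ℕ} (hf : ∀ i, 1 ≤ f i) (hcap : ∀ t, #{i | f i = t} ≤ k)
    (hcard : Fintype.card ι = k * m) : k * ∑ t ∈ range m, (t + 1) ≤ ∑ i, f i := by
  have hmax : Fintype.card ι * m ≤ ∑ i, max (f i) m := by
    simpa using sum_le_sum fun i (_ : i ∈ univ) => le_max_right (f i) m
  linarith [sum_max_add_mul_sum_range_succ_le hf hcap hcard]

lemma le_of_sum_le_mul_sum_range_succ {m : ℕ} (hf : ∀ i, 1 ≤ f i) (hcap : ∀ t, #{i | f i = t} ≤ k)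
    (hcard : Fintype.card ι = k * m) (htight : ∑ i, f i ≤ k * ∑ t ∈ range m, (t + 1)) (i : ι) :
    f i ≤ m := by
  have hmax : ∑ i, max (f i) m ≤ ∑ _i : ι, m := by
    rw [sum_const, card_univ, smul_eq_mul]
    linarith [sum_max_add_mul_sum_range_succ_le hf hcap hcard]
  have := (sum_eq_sum_iff_of_le fun i (_ : i ∈ univ) => le_max_right (f i) m).1
    (le_antisymm (sum_le_sum fun i _ => le_max_right (f i) m) hmax) i (mem_univ i)
  omega

lemma card_filter_eq_of_le {m : ℕ} (hf : ∀ i, 1 ≤ f i) (hcap : ∀ t, #{i | f i = t} ≤ k)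
    (hcard : Fintype.card ι = k * m) (hfm : ∀ i, f i ≤ m) :
    ∀ t ∈ Icc 1 m, #{i | f i = t} = k := by
  refine (sum_eq_sum_iff_of_le fun t _ => hcap t).1 ?_
  rw [← card_eq_sum_card_fiberwise fun i _ => mem_Icc.2 ⟨hf i, hfm i⟩, sum_const, Nat.card_Icc,
    card_univ, hcard, smul_eq_mul, Nat.add_sub_cancel, mul_comm]

end Schedule

lemma exists_finpartition_fibers {ι β : Type*} [Fintype ι] [DecidableEq ι] [DecidableEq β]
    {g : ι → β} {s : Finset β} (hg : ∀ i, g i ∈ s)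
    (hne : ∀ b ∈ s, ({i | g i = b} : Finset ι).Nonempty) :
    ∃ P : Finpartition (univ : Finset ι),
      #P.parts = #s ∧ ∀ B ∈ P.parts, ∃ b ∈ s, B = ({i | g i = b} : Finset ι) := by
  have hinj : Set.InjOn (fun b => ({i | g i = b} : Finset ι)) s := by
    intro b hb c _ hbc
    obtain ⟨i, hi⟩ := hne b hb
    have hi' : i ∈ ({i | g i = c} : Finset ι) := by simpa only [← hbc]
    simp only [mem_filter] at hi hi'
    exact hi.2.symm.trans hi'.2
  refine ⟨Finpartition.ofExistsUnique (s.image fun b => ({i | g i = b} : Finset ι))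
    (fun _ _ => subset_univ _)
    (fun i _ => ⟨({j | g j = g i} : Finset ι), ⟨mem_image_of_mem _ (hg i), by simp⟩, ?_⟩) ?_,
    card_image_of_injOn hinj, ?_⟩
  · rintro B ⟨hB, hiB⟩
    obtain ⟨b, -, rfl⟩ := mem_image.1 hB
    simp only [mem_filter, mem_univ, true_and] at hiB
    rw [hiB]
  · intro h
    obtain ⟨b, hb, hbe⟩ := mem_image.1 h
    exact (hne b hb).ne_empty hbe
  · intro B hB
    obtain ⟨b, hb, rfl⟩ := mem_image.1 hB
    exact ⟨b, hb, rfl⟩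

lemma Finpartition.exists_schedule {ι : Type*} [Fintype ι] [DecidableEq ι] {k : ℕ}
    (P : Finpartition (univ : Finset ι)) (hP : ∀ B ∈ P.parts, #B = k) :
    ∃ f : ι → ℕ, (∀ i, 1 ≤ f i) ∧ (∀ i j, f i = f j → j ∈ P.part i) ∧
      ∑ i, f i = k * ∑ t ∈ range #P.parts, (t + 1) := by
  set e := P.parts.equivFin
  have hpart : ∀ i, P.part i ∈ P.parts := fun i => P.part_mem.2 (mem_univ i)
  refine ⟨fun i => e ⟨P.part i, hpart i⟩ + 1, fun i => Nat.le_add_left 1 _, ?_, ?_⟩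
  · intro i j hij
    have heq : e ⟨P.part j, hpart j⟩ = e ⟨P.part i, hpart i⟩ := Fin.ext (by simp only at hij; omega)
    have : P.part j = P.part i := congrArg Subtype.val (e.injective heq)
    rw [← this]
    exact P.mem_part (mem_univ j)
  · have hconst : ∀ B (hB : B ∈ P.parts), ∑ i ∈ B, ((e ⟨P.part i, hpart i⟩ : ℕ) + 1) =
        k * (e ⟨B, hB⟩ + 1) := by
      intro B hB
      have : ∀ i ∈ B, (e ⟨P.part i, hpart i⟩ : ℕ) + 1 = e ⟨B, hB⟩ + 1 := fun i hi => by
        simp only [P.part_eq_of_mem hB hi]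
      rw [sum_congr rfl this, sum_const, hP B hB, smul_eq_mul]
    rw [P.sum_eq_sum_parts, ← sum_attach, sum_congr rfl fun B _ => hconst B.1 B.2, ← mul_sum,
      ← univ_eq_attach, e.sum_comp (fun j => (j : ℕ) + 1), Fin.sum_univ_eq_sum_range (· + 1)]

section Batching

variable {ι : Type*} [Fintype ι] [DecidableEq ι] {x : ι → ℕ} {k m T : ℕ}

lemma exists_schedule_of_finpartition (hlow : ∀ i, T < (k + 1) * x i)
    (P : Finpartition (univ : Finset ι)) (hcard : Fintype.card ι = k * #P.parts)
    (hP : ∀ B ∈ P.parts, ∑ i ∈ B, x i = T) :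
    ∃ f : ι → ℕ, (∀ i, 1 ≤ f i) ∧ (∀ t, ∑ i ∈ univ.filter (fun i => f i = t), x i ≤ T) ∧
      ∑ i, f i = k * ∑ t ∈ range #P.parts, (t + 1) := by
  have hPk : ∀ B ∈ P.parts, #B = k := P.card_eq_of_card_le
    (fun B hB => card_le_of_sum_le_of_lt_mul (fun i _ => hlow i) (hP B hB).le) hcard
  obtain ⟨f, hf, hsame, hsum⟩ := P.exists_schedule hPk
  refine ⟨f, hf, fun t => ?_, hsum⟩
  rcases (univ.filter fun i => f i = t).eq_empty_or_nonempty with hempty | ⟨i, hi⟩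
  · simp [hempty]
  · have hsub : univ.filter (fun j => f j = t) ⊆ P.part i := fun j hj => by
      simp only [mem_filter, mem_univ, true_and] at hi hj
      exact hsame i j (hi.trans hj.symm)
    exact (sum_le_sum_of_subset hsub).trans (hP _ (P.part_mem.2 (mem_univ i))).le

lemma exists_finpartition_of_tight_schedule (hk : 0 < k) (hlow : ∀ i, T < (k + 1) * x i)
    (hsum : ∑ i, x i = m * T) (hcard : Fintype.card ι = k * m) (f : ι → ℕ) (hf : ∀ i, 1 ≤ f i)
    (hfeas : ∀ t, ∑ i ∈ univ.filter (fun i => f i = t), x i ≤ T)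
    (htight : ∑ i, f i ≤ k * ∑ t ∈ range m, (t + 1)) :
    ∃ P : Finpartition (univ : Finset ι), #P.parts = m ∧ ∀ B ∈ P.parts, ∑ i ∈ B, x i = T := by
  have hcap : ∀ t, #{i | f i = t} ≤ k :=
    fun t => card_le_of_sum_le_of_lt_mul (fun i _ => hlow i) (hfeas t)
  have hfm := le_of_sum_le_mul_sum_range_succ hf hcap hcard htight
  have hmaps : ∀ i, f i ∈ Icc 1 m := fun i => mem_Icc.2 ⟨hf i, hfm i⟩
  have hfull : ∀ t ∈ Icc 1 m, ∑ i ∈ univ.filter (fun i => f i = t), x i = T := by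
    refine (sum_eq_sum_iff_of_le fun t _ => hfeas t).1 ?_
    rw [sum_fiberwise_of_maps_to (fun i _ => hmaps i), hsum, sum_const, Nat.card_Icc,
      Nat.add_sub_cancel, smul_eq_mul]
  obtain ⟨P, hPc, hPs⟩ := exists_finpartition_fibers hmaps fun t ht => by
    rw [← card_pos, card_filter_eq_of_le hf hcap hcard hfm t ht]
    exact hk
  refine ⟨P, by rw [hPc, Nat.card_Icc, Nat.add_sub_cancel], fun B hB => ?_⟩
  obtain ⟨t, ht, rfl⟩ := hPs B hB
  exact hfull t ht

end Batching

theorem stmt6_general (m T : ℕ) (x : Fin (3 * m) → ℕ)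
    (hlow : ∀ i, T < 4 * x i)
    (hsum : ∑ i, x i = m * T) :
    ((∃ P : Finpartition (Finset.univ : Finset (Fin (3 * m))),
        P.parts.card = m ∧ ∀ B ∈ P.parts, ∑ i ∈ B, x i = T) →
      (∃ f : Fin (3 * m) → ℕ, (∀ i, 1 ≤ f i) ∧
          (∀ t : ℕ, ∑ i ∈ Finset.univ.filter (fun i => f i = t), x i ≤ T) ∧
          ∑ i, f i = 3 * m * (m + 1) / 2) ∧
      (∀ f : Fin (3 * m) → ℕ, (∀ i, 1 ≤ f i) →
          (∀ t : ℕ, ∑ i ∈ Finset.univ.filter (fun i => f i = t), x i ≤ T) →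
          3 * m * (m + 1) / 2 ≤ ∑ i, f i)) ∧
    ((¬ ∃ P : Finpartition (Finset.univ : Finset (Fin (3 * m))),
        P.parts.card = m ∧ ∀ B ∈ P.parts, ∑ i ∈ B, x i = T) →
      ∀ f : Fin (3 * m) → ℕ, (∀ i, 1 ≤ f i) →
        (∀ t : ℕ, ∑ i ∈ Finset.univ.filter (fun i => f i = t), x i ≤ T) →
        3 * m * (m + 1) / 2 < ∑ i, f i) := by
  have hcard : Fintype.card (Fin (3 * m)) = 3 * m := Fintype.card_fin _
  have htri : 3 * m * (m + 1) / 2 = 3 * ∑ t ∈ range m, (t + 1) := by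
    rw [mul_assoc, ← sum_range_succ_mul_two m]
    omega
  have hlower : ∀ f : Fin (3 * m) → ℕ, (∀ i, 1 ≤ f i) →
      (∀ t, ∑ i ∈ univ.filter (fun i => f i = t), x i ≤ T) →
      3 * ∑ t ∈ range m, (t + 1) ≤ ∑ i, f i := fun f hf hfeas =>
    mul_sum_range_succ_le_sum hf
      (fun t => card_le_of_sum_le_of_lt_mul (fun i _ => hlow i) (hfeas t)) hcard
  rw [htri]
  refine ⟨fun ⟨P, hPc, hPs⟩ => ⟨?_, hlower⟩, fun hnP f hf hfeas =>
    (hlower f hf hfeas).lt_of_ne fun h => hnP ?_⟩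
  · obtain ⟨f, hf, hfeas, hsumf⟩ :=
      exists_schedule_of_finpartition hlow P (by rw [hcard, hPc]) hPs
    exact ⟨f, hf, hfeas, by rw [hsumf, hPc]⟩
  · exact exists_finpartition_of_tight_schedule three_pos hlow hsum hcard f hf hfeas h.ge

theorem stmt6 (m T : ℕ) (hm : 0 < m) (x : Fin (3 * m) → ℕ)
    (hlow : ∀ i, T < 4 * x i) (hhigh : ∀ i, 2 * x i < T)
    (hsum : ∑ i, x i = m * T) :
    ((∃ P : Finpartition (Finset.univ : Finset (Fin (3 * m))),
        P.parts.card = m ∧ ∀ B ∈ P.parts, ∑ i ∈ B, x i = T) →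
      (∃ f : Fin (3 * m) → ℕ, (∀ i, 1 ≤ f i) ∧
          (∀ t : ℕ, ∑ i ∈ Finset.univ.filter (fun i => f i = t), x i ≤ T) ∧
          ∑ i, f i = 3 * m * (m + 1) / 2) ∧
      (∀ f : Fin (3 * m) → ℕ, (∀ i, 1 ≤ f i) →
          (∀ t : ℕ, ∑ i ∈ Finset.univ.filter (fun i => f i = t), x i ≤ T) →
          3 * m * (m + 1) / 2 ≤ ∑ i, f i)) ∧
    ((¬ ∃ P : Finpartition (Finset.univ : Finset (Fin (3 * m))),
        P.parts.card = m ∧ ∀ B ∈ P.parts, ∑ i ∈ B, x i = T) →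
      ∀ f : Fin (3 * m) → ℕ, (∀ i, 1 ≤ f i) →
        (∀ t : ℕ, ∑ i ∈ Finset.univ.filter (fun i => f i = t), x i ≤ T) →
        3 * m * (m + 1) / 2 < ∑ i, f i) :=
  stmt6_general m T x hlow hsum
end

section
/- Under the hypotheses: n, q positive integers, S₁, S₂ > 0 with (S₁+S₂)/(n+q)² > S₁/n², and additionally S₁/n > o_max/2 for some o_max > 0 where o_max ≥ every output in the first batch, and the maximum element M₂ of the second batch satisfies M₂ ≥ S₂/q. Then M₂ > o_max. -/
theorem stmt12 (n q : ℕ) (hn : 0 < n) (hq : 0 < q)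
    (S₁ S₂ : ℝ) (hS₁ : 0 < S₁) (hS₂ : 0 < S₂)
    (hF : (S₁ + S₂) / ((n : ℝ) + q) ^ 2 > S₁ / (n : ℝ) ^ 2)
    (omax : ℝ) (homax : 0 < omax) (hbal : S₁ / n > omax / 2)
    (M₂ : ℝ) (hM₂ : M₂ ≥ S₂ / q) :
    M₂ > omax := by
  have hn' : (0:ℝ) < n := by exact_mod_cast hn
  have hq' : (0:ℝ) < q := by exact_mod_cast hq
  have h1 : (S₁ + S₂) * (n:ℝ)^2 > S₁ * ((n:ℝ) + q)^2 := by
    rw [gt_iff_lt, div_lt_div_iff₀ (by positivity) (by positivity)] at hF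
    linarith
  have h2 : S₂ / q > 2 * (S₁ / n) := by
    rw [gt_iff_lt, mul_div_assoc', div_lt_div_iff₀ hn' hq']
    nlinarith [mul_pos hS₁ hq', mul_pos hn' hq']
  have h3 : 2 * (S₁ / n) > omax := by linarith
  linarith
end
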